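/- Every timed language accepted by a one-clock integer-reset timed automaton (1-IRTA) is also accepted by a strict 1-IRTA whose maximal constant appearing in guards is no greater than that of the original automaton; moreover, if the original 1-IRTA is deterministic, the strict 1-IRTA can be chosen deterministic. -/

import Mathlib

open scoped NNReal Classical

namespace IRTA

/-- A timestamp is a finite sequence of non-negative reals. -/
abbrev Timestamp : Type := List ℝ≥0

/-- A timed word is a finite sequence of (delay, letter) pairs. -/
abbrev TimedWord (A : Type) : Type := List (ℝ≥0 × A)

/-- Fractional part of a non-negative real. -/
noncomputable def fracPart (x : ℝ≥0) : ℝ≥0 := x - (⌊x⌋₊ : ℝ≥0)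

/-- `x` is a natural-number value. -/
def IsNatVal (x : ℝ≥0) : Prop := ∃ m : ℕ, x = (m : ℝ≥0)

/-- Region equivalence `≡^K`. -/
def RegEq (K : ℕ) (x y : ℝ≥0) : Prop :=
  (⌊x⌋₊ = ⌊y⌋₊ ∧ (fracPart x = 0 ↔ fracPart y = 0)) ∨ ((K : ℝ≥0) < x ∧ (K : ℝ≥0) < y)

/-- One step of the (greedy) clock evolution: reset whenever the value is an
integer between `0` and `K`. -/
noncomputable def resetStep (K : ℕ) (v : ℝ≥0) : ℝ≥0 :=
  if ∃ m : ℕ, m ≤ K ∧ v = (m : ℝ≥0) then 0 else v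

/-- Auxiliary function computing `c^K` with accumulator `v`. -/
noncomputable def cKAux (K : ℕ) : ℝ≥0 → Timestamp → ℝ≥0
  | v, [] => v
  | v, t :: d => cKAux K (resetStep K (v + t)) d

/-- `c^K(d)`: the sum of the delays after the last integral position of `d`. -/
noncomputable def cK (K : ℕ) (d : Timestamp) : ℝ≥0 := cKAux K 0 d

/-- `c^K` of a timed word is `c^K` of its timestamp. -/
noncomputable def cKW {A : Type} (K : ℕ) (w : TimedWord A) : ℝ≥0 :=
  cK K (w.map Prod.fst)

/-- `c^K_⊤` : `c^K` truncated at `K`. -/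
noncomputable def cKTop {A : Type} (K : ℕ) (w : TimedWord A) : WithTop ℝ≥0 :=
  if cKW K w ≤ (K : ℝ≥0) then ((cKW K w : ℝ≥0) : WithTop ℝ≥0) else ⊤

/-! ### Clock constraints and one-clock timed automata -/

/-- Clock constraints `φ ::= x < m | m < x | x = m | φ ∧ φ`. -/
inductive CC : Type where
  | lt : ℕ → CC
  | gt : ℕ → CC
  | eq : ℕ → CC
  | and : CC → CC → CC

/-- Satisfaction of a clock constraint by a clock value. -/
def CC.sat : CC → ℝ≥0 → Prop
  | .lt m, x => x < (m : ℝ≥0)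
  | .gt m, x => (m : ℝ≥0) < x
  | .eq m, x => x = (m : ℝ≥0)
  | .and φ ψ, x => φ.sat x ∧ ψ.sat x

/-- The largest constant appearing in a clock constraint. -/
def CC.maxConst : CC → ℕ
  | .lt m => m
  | .gt m => m
  | .eq m => m
  | .and φ ψ => max φ.maxConst ψ.maxConst

/-- A transition of a one-clock timed automaton; `reset = true` means the
clock is reset (the `r = 0` case). -/
structure TTrans (Q A : Type) where
  src : Q
  dst : Q
  lab : A
  guard : CC
  reset : Bool

/-- A one-clock timed automaton. -/
structure TA (A : Type) where
  Q : Type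
  init : Q
  final : Set Q
  trans : Set (TTrans Q A)

/-- The automaton has finitely many states and transitions. -/
def TA.IsFinite {A : Type} (M : TA A) : Prop := Finite M.Q ∧ M.trans.Finite

/-- Runs of a one-clock timed automaton between configurations. -/
inductive Steps {A : Type} (M : TA A) : M.Q × ℝ≥0 → TimedWord A → M.Q × ℝ≥0 → Prop
  | nil (c : M.Q × ℝ≥0) : Steps M c [] c
  | cons {q : M.Q} {ν t : ℝ≥0} {a : A} {w : TimedWord A} {c : M.Q × ℝ≥0}
      (θ : TTrans M.Q A) (hθ : θ ∈ M.trans) (hsrc : θ.src = q) (hlab : θ.lab = a)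
      (hg : θ.guard.sat (ν + t))
      (hrest : Steps M (θ.dst, if θ.reset then 0 else ν + t) w c) :
      Steps M (q, ν) ((t, a) :: w) c

/-- The language of `M` from a given configuration. -/
def TA.LangFrom {A : Type} (M : TA A) (c : M.Q × ℝ≥0) : Set (TimedWord A) :=
  {w | ∃ q' : M.Q, ∃ ν' : ℝ≥0, Steps M c w (q', ν') ∧ q' ∈ M.final}

/-- The language of `M` (from the initial configuration). -/
def TA.Lang {A : Type} (M : TA A) : Set (TimedWord A) := M.LangFrom (M.init, 0)

/-- Determinism: distinct transitions with the same source and letter have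
disjoint guards. -/
def TA.Deterministic {A : Type} (M : TA A) : Prop :=
  ∀ θ₁ ∈ M.trans, ∀ θ₂ ∈ M.trans, θ₁ ≠ θ₂ → θ₁.src = θ₂.src → θ₁.lab = θ₂.lab →
    ∀ x : ℝ≥0, ¬ (θ₁.guard.sat x ∧ θ₂.guard.sat x)

/-- Completeness: every timed word admits a run from the initial configuration. -/
def TA.Complete {A : Type} (M : TA A) : Prop :=
  ∀ w : TimedWord A, ∃ c : M.Q × ℝ≥0, Steps M (M.init, 0) w c

/-- A 1-IRTA: every resetting transition has an equality guard. -/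
def TA.IsIRTA {A : Type} (M : TA A) : Prop :=
  ∀ θ ∈ M.trans, θ.reset = true → ∃ m : ℕ, θ.guard = CC.eq m

/-- Guards allowed in a strict 1-IRTA with constant `K`. -/
def StrictGuard (K : ℕ) (φ : CC) : Prop :=
  (∃ m : ℕ, φ = CC.eq m) ∨ (∃ m : ℕ, φ = CC.and (CC.gt m) (CC.lt (m + 1))) ∨ φ = CC.gt K

/-- Strictness with constant `K`: every guard is of one of the allowed forms
and a guard is an equality iff the transition resets. -/
def TA.IsStrict {A : Type} (M : TA A) (K : ℕ) : Prop :=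
  ∀ θ ∈ M.trans, StrictGuard K θ.guard ∧ ((∃ m : ℕ, θ.guard = CC.eq m) ↔ θ.reset = true)

/-- All constants appearing in guards are at most `K`. -/
def TA.MaxConstLE {A : Type} (M : TA A) (K : ℕ) : Prop :=
  ∀ θ ∈ M.trans, θ.guard.maxConst ≤ K

/-- `M` reaches the same control state on reading `u` and `v` from the initial
configuration. -/
def TA.SameState {A : Type} (M : TA A) (u v : TimedWord A) : Prop :=
  ∃ q : M.Q, ∃ ν ν' : ℝ≥0, Steps M (M.init, 0) u (q, ν) ∧ Steps M (M.init, 0) v (q, ν')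

/-- A `K`-acceptor. -/
def IsKAcceptor {A : Type} (M : TA A) (K : ℕ) : Prop :=
  M.IsFinite ∧ M.Complete ∧ M.Deterministic ∧ M.IsIRTA ∧ M.IsStrict K ∧ M.MaxConstLE K ∧
    ∀ u v : TimedWord A, M.SameState u v → RegEq K (cKW K u) (cKW K v)

/-! ### Equivalences on timed words -/

/-- `L`-preservation of a relation on timed words. -/
def LPreserving {A : Type} (L : Set (TimedWord A)) (r : TimedWord A → TimedWord A → Prop) :
    Prop :=
  ∀ u v : TimedWord A, r u v → (u ∈ L ↔ v ∈ L)

/-- `K`-monotonicity of a relation on timed words. -/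
def KMonotonic {A : Type} (K : ℕ) (r : TimedWord A → TimedWord A → Prop) : Prop :=
  ∀ u v : TimedWord A, r u v →
    RegEq K (cKW K u) (cKW K v) ∧
      ∀ (a : A) (t t' : ℝ≥0), RegEq K (cKW K u + t) (cKW K v + t') →
        r (u ++ [(t, a)]) (v ++ [(t', a)])

/-- Finite index: there are finitely many classes `{v | r u v}`. -/
def FiniteIndex {A : Type} (r : TimedWord A → TimedWord A → Prop) : Prop :=
  Set.Finite (Set.range fun u : TimedWord A => {v : TimedWord A | r u v})

/-! ### The rescaling maps -/

/-- The bijection `f_{λ→λ'}` of the open unit interval. -/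
noncomputable def fScale (lam lam' t : ℝ≥0) : ℝ≥0 :=
  if t ≤ lam then (lam' / lam) * t else lam' + ((1 - lam') / (1 - lam)) * (t - lam)

/-- The new delay `t'` computed from the current clock values `y, y'` and delay `t`. -/
noncomputable def tauStep (K : ℕ) (y y' t : ℝ≥0) : ℝ≥0 :=
  if (IsNatVal y ∧ IsNatVal y') ∨ ((K : ℝ≥0) < y ∧ (K : ℝ≥0) < y') then t
  else (⌊t⌋₊ : ℝ≥0) + fScale (1 - fracPart y) (1 - fracPart y') (fracPart t)

/-- Auxiliary rescaling map on timestamps, carrying the current clock values. -/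
noncomputable def tauAux (K : ℕ) : ℝ≥0 → ℝ≥0 → Timestamp → Timestamp
  | _, _, [] => []
  | y, y', t :: d =>
      tauStep K y y' t ::
        tauAux K (resetStep K (y + t)) (resetStep K (y' + tauStep K y y' t)) d

/-- The rescaling map `τ_{x→x'}` on timestamps. -/
noncomputable def tau (K : ℕ) (x x' : ℝ≥0) (d : Timestamp) : Timestamp :=
  tauAux K (resetStep K x) (resetStep K x') d

/-- Auxiliary rescaling map on timed words. -/
noncomputable def tauWAux {A : Type} (K : ℕ) : ℝ≥0 → ℝ≥0 → TimedWord A → TimedWord A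
  | _, _, [] => []
  | y, y', (t, a) :: w =>
      (tauStep K y y' t, a) ::
        tauWAux K (resetStep K (y + t)) (resetStep K (y' + tauStep K y y' t)) w

/-- The rescaling map `τ_{x→x'}` on timed words. -/
noncomputable def tauW {A : Type} (K : ℕ) (x x' : ℝ≥0) (w : TimedWord A) : TimedWord A :=
  tauWAux K (resetStep K x) (resetStep K x') w

/-! ### Residuals and the syntactic equivalence -/

/-- The residual language `u^{-1}L`. -/
def residual {A : Type} (L : Set (TimedWord A)) (u : TimedWord A) : Set (TimedWord A) :=
  {w : TimedWord A | u ++ w ∈ L}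

/-- The syntactic equivalence `≈^{L,K}`. -/
def ApproxLK {A : Type} (L : Set (TimedWord A)) (K : ℕ) (u v : TimedWord A) : Prop :=
  RegEq K (cKW K u) (cKW K v) ∧
    (tauW K (cKW K u) (cKW K v)) '' (residual L u) = residual L v

/-! ### The automaton built from a monotonic equivalence -/

/-- The region guard `φ([t])`. -/
noncomputable def phiOf (K : ℕ) (t : ℝ≥0) : CC :=
  if t ≤ (K : ℝ≥0) then
    (if IsNatVal t then CC.eq ⌊t⌋₊ else CC.and (CC.gt ⌊t⌋₊) (CC.lt (⌊t⌋₊ + 1)))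
  else CC.gt K

/-- The automaton `A_≈` built from an equivalence `s` on timed words. -/
noncomputable def Aapprox {A : Type} (L : Set (TimedWord A)) (K : ℕ)
    (s : Setoid (TimedWord A)) : TA A where
  Q := Quotient s
  init := Quotient.mk s ([] : TimedWord A)
  final := {q : Quotient s | ∃ u : TimedWord A, q = Quotient.mk s u ∧ u ∈ L}
  trans := {θ : TTrans (Quotient s) A |
    ∃ (u : TimedWord A) (a : A) (t : ℝ≥0),
      θ.src = Quotient.mk s u ∧ θ.dst = Quotient.mk s (u ++ [(t, a)]) ∧ θ.lab = a ∧
      θ.guard = phiOf K (cKW K u + t) ∧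
      (θ.reset = true ↔ ∃ m : ℕ, m ≤ K ∧ cKW K u + t = (m : ℝ≥0))}

/-! ### Half-integral and small words -/

/-- Every delay has fractional part `0` or `1/2`. -/
def HalfIntegral {A : Type} (w : TimedWord A) : Prop :=
  ∀ p ∈ w, fracPart p.1 = 0 ∨ fracPart p.1 = 1 / 2

/-- Every delay is `< K + 1`. -/
def SmallWord {A : Type} (K : ℕ) (w : TimedWord A) : Prop :=
  ∀ p ∈ w, p.1 < (K : ℝ≥0) + 1

/-- The delays of `Σ_K`: half-integral values `≤ K + 1/2`. -/
def IsSigmaK (K : ℕ) (t : ℝ≥0) : Prop :=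
  (fracPart t = 0 ∨ fracPart t = 1 / 2) ∧ t ≤ (K : ℝ≥0) + 1 / 2

/-- Words over `Σ_K` (small half-integral words). -/
def SigmaWord {A : Type} (K : ℕ) (w : TimedWord A) : Prop :=
  ∀ p ∈ w, IsSigmaK K p.1



/-! ### `K`-acceptors with their region representatives -/

/-- A `K`-acceptor bundled with the half-integral representative of the
unique region of each state. -/
structure KAcc (A : Type) (K : ℕ) where
  M : TA A
  acc : IsKAcceptor M K
  reg : M.Q → ℝ≥0
  regHalf : ∀ q : M.Q, fracPart (reg q) = 0 ∨ fracPart (reg q) = 1 / 2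
  regLe : ∀ q : M.Q, reg q ≤ (K : ℝ≥0) + 1 / 2
  regSpec : ∀ (w : TimedWord A) (q : M.Q) (x : ℝ≥0),
    Steps M (M.init, 0) w (q, x) → RegEq K x (reg q)

/-- The minimization equivalences `∼^i` on the states of a `K`-acceptor. -/
def simEq {A : Type} {K : ℕ} (B : KAcc A K) : ℕ → B.M.Q → B.M.Q → Prop
  | 0, p, q => B.reg p = B.reg q ∧ (p ∈ B.M.final ↔ q ∈ B.M.final)
  | i + 1, p, q => simEq B i p q ∧
      ∀ (t : ℝ≥0) (a : A), IsSigmaK K t →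
        ∀ θ₁ θ₂ : TTrans B.M.Q A, θ₁ ∈ B.M.trans → θ₂ ∈ B.M.trans →
          θ₁.src = p → θ₂.src = q → θ₁.lab = a → θ₂.lab = a →
          θ₁.guard = phiOf K t → θ₂.guard = phiOf K t →
          simEq B i θ₁.dst θ₂.dst

/-- The quotient automaton `B/∼^m`. -/
noncomputable def quotTA {A : Type} {K : ℕ} (B : KAcc A K) (m : ℕ) : TA A where
  Q := Quot (simEq B m)
  init := Quot.mk (simEq B m) B.M.init
  final := {c : Quot (simEq B m) | ∃ q ∈ B.M.final, c = Quot.mk (simEq B m) q}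
  trans := {θ : TTrans (Quot (simEq B m)) A |
    ∃ θ₀ ∈ B.M.trans,
      θ.src = Quot.mk (simEq B m) θ₀.src ∧ θ.dst = Quot.mk (simEq B m) θ₀.dst ∧
      θ.lab = θ₀.lab ∧ θ.guard = θ₀.guard ∧ θ.reset = θ₀.reset}

/-! ### Observation tables -/

/-- An observation table over `Σ_K`. -/
structure ObsTable (A : Type) (K : ℕ) where
  U1 : Set (TimedWord A)
  E : Set (TimedWord A)
  val : TimedWord A → TimedWord A → Bool
  U1fin : U1.Finite
  Efin : E.Finite
  U1sigma : ∀ u ∈ U1, SigmaWord K u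
  Esigma : ∀ e ∈ E, SigmaWord K e
  epsU1 : ([] : TimedWord A) ∈ U1
  prefixClosed : ∀ (u : TimedWord A) (x : ℝ≥0 × A), u ++ [x] ∈ U1 → u ∈ U1
  epsE : ([] : TimedWord A) ∈ E
  suffixClosed : ∀ (x : ℝ≥0 × A) (e : TimedWord A), x :: e ∈ E → e ∈ E

/-- The set `U2` of one-letter `Σ_K`-extensions of `U1`. -/
def obsU2 {A : Type} {K : ℕ} (T : ObsTable A K) : Set (TimedWord A) :=
  {w : TimedWord A | ∃ u ∈ T.U1, ∃ (t : ℝ≥0) (a : A), IsSigmaK K t ∧ w = u ++ [(t, a)]}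

/-- `R(u)`: the row of `u` (restricted to `E`) together with `c^K_⊤(u)`. -/
noncomputable def Rof {A : Type} {K : ℕ} (T : ObsTable A K) (u : TimedWord A) :
    ({e : TimedWord A // e ∈ T.E} → Bool) × WithTop ℝ≥0 :=
  (fun e => T.val u e.1, cKTop K u)

/-- The table is closed. -/
def ObsTable.Closed {A : Type} {K : ℕ} (T : ObsTable A K) : Prop :=
  ∀ w ∈ obsU2 T, ∃ u ∈ T.U1, Rof T w = Rof T u

/-- The table is consistent. -/
def ObsTable.Consistent {A : Type} {K : ℕ} (T : ObsTable A K) : Prop :=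
  ∀ u ∈ T.U1, ∀ w ∈ T.U1, Rof T u = Rof T w →
    ∀ (t : ℝ≥0) (a : A), IsSigmaK K t → Rof T (u ++ [(t, a)]) = Rof T (w ++ [(t, a)])

/-- The automaton `A_𝒯` induced by a (closed and consistent) observation table. -/
noncomputable def ATable {A : Type} {K : ℕ} (T : ObsTable A K) : TA A where
  Q := {f : ({e : TimedWord A // e ∈ T.E} → Bool) × WithTop ℝ≥0 // ∃ u ∈ T.U1, f = Rof T u}
  init := ⟨Rof T [], ⟨[], T.epsU1, rfl⟩⟩
  final := {q | ∃ u ∈ T.U1, q.1 = Rof T u ∧ T.val u [] = true}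
  trans := {θ | ∃ u ∈ T.U1, ∃ (t : ℝ≥0) (a : A), IsSigmaK K t ∧
      θ.src.1 = Rof T u ∧ θ.dst.1 = Rof T (u ++ [(t, a)]) ∧ θ.lab = a ∧
      θ.guard = phiOf K (cKW K u + t) ∧
      (θ.reset = true ↔ ∃ m : ℕ, m ≤ K ∧ cKW K u + t = (m : ℝ≥0))}

/-- A `K`-acceptor is consistent with the observation table `𝒯`. -/
def ConsistentWith {A : Type} {K : ℕ} (M : TA A) (T : ObsTable A K) : Prop :=
  ∀ w : TimedWord A, (w ∈ T.U1 ∨ w ∈ obsU2 T) → ∀ e ∈ T.E,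
    ∀ (q : M.Q) (ν : ℝ≥0), Steps M (M.init, 0) (w ++ e) (q, ν) →
      (q ∈ M.final ↔ T.val w e = true)

/-- Isomorphism of one-clock timed automata. -/
structure TAIso {A : Type} (M N : TA A) where
  toEquiv : M.Q ≃ N.Q
  init_eq : toEquiv M.init = N.init
  final_iff : ∀ q : M.Q, q ∈ M.final ↔ toEquiv q ∈ N.final
  trans_iff : ∀ θ : TTrans M.Q A,
    θ ∈ M.trans ↔
      (⟨toEquiv θ.src, toEquiv θ.dst, θ.lab, θ.guard, θ.reset⟩ : TTrans N.Q A) ∈ N.trans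

/-!
The strict automaton runs a clock that is reset at every integral value `≤ K`, so every guard it
needs is a region `x = m`, `m < x < m + 1` or `K < x`. A state pairs a state of `M` with an offset
`m ≤ K + 1`: the clock of `M` equals the new clock plus `m`, or both exceed `K`. Guards of `M` have
constants `≤ K`, so whether they hold is determined by the offset and the region of the new clock,
and `M` resets only at integral values `≤ K`, where the new clock resets too. The two automata
therefore simulate each other step by step. Two transitions leaving the same state on the same
letter with overlapping guards have the same region as guard, so the transitions of `M` they
simulate are enabled at a common clock value and coincide when `M` is deterministic.
-/

lemma fracPart_eq_zero_iff {x : ℝ≥0} : fracPart x = 0 ↔ x = ⌊x⌋₊ := by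
  rw [fracPart, tsub_eq_zero_iff_le]
  exact ⟨fun h => le_antisymm h (Nat.floor_le zero_le), le_of_eq⟩

lemma isNatVal_iff_fracPart_eq_zero {x : ℝ≥0} : IsNatVal x ↔ fracPart x = 0 := by
  rw [fracPart_eq_zero_iff]
  refine ⟨?_, fun h => ⟨_, h⟩⟩
  rintro ⟨m, rfl⟩
  rw [Nat.floor_natCast]

lemma eq_natCast_iff_floor_eq {x : ℝ≥0} {m : ℕ} : x = m ↔ ⌊x⌋₊ = m ∧ fracPart x = 0 := by
  constructor
  · rintro rfl
    exact ⟨Nat.floor_natCast m, isNatVal_iff_fracPart_eq_zero.mp ⟨m, rfl⟩⟩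
  · rintro ⟨hm, hx⟩
    rw [fracPart_eq_zero_iff.mp hx, hm]

lemma fracPart_add_natCast (x : ℝ≥0) (m : ℕ) : fracPart (x + m) = fracPart x := by
  rw [fracPart, fracPart, Nat.floor_add_natCast zero_le, Nat.cast_add,
    add_tsub_add_eq_tsub_right]

lemma isNatVal_of_add_natCast_eq {x : ℝ≥0} {m n : ℕ} (h : x + m = n) : IsNatVal x :=
  ⟨n - m, by rw [Nat.cast_tsub]; exact eq_tsub_of_add_eq h⟩

namespace RegEq

variable {K : ℕ} {x y : ℝ≥0}

lemma symm (h : RegEq K x y) : RegEq K y x :=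
  h.imp (fun h => ⟨h.1.symm, h.2.symm⟩) And.symm

lemma add_natCast (h : RegEq K x y) (m : ℕ) : RegEq K (x + m) (y + m) := by
  rcases h with ⟨hf, hz⟩ | ⟨hx, hy⟩
  · refine Or.inl ⟨?_, ?_⟩
    · rw [Nat.floor_add_natCast zero_le, Nat.floor_add_natCast zero_le, hf]
    · rwa [fracPart_add_natCast, fracPart_add_natCast]
  · exact Or.inr ⟨hx.trans_le le_self_add, hy.trans_le le_self_add⟩

lemma eq_of_isNatVal (h : RegEq K x y) (hx : IsNatVal x) (hxK : x ≤ K) : x = y := by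
  rcases h with ⟨hf, hz⟩ | ⟨hx', -⟩
  · have hy := fracPart_eq_zero_iff.mp (hz.mp (isNatVal_iff_fracPart_eq_zero.mp hx))
    rw [fracPart_eq_zero_iff.mp (isNatVal_iff_fracPart_eq_zero.mp hx), hy, hf]
  · exact absurd hxK (not_le.mpr hx')

end RegEq

/-- Unlike `RegEq K`, this relation is preserved by delays. -/
def ClockEq (K : ℕ) (x y : ℝ≥0) : Prop :=
  x = y ∨ ((K : ℝ≥0) < x ∧ (K : ℝ≥0) < y)

namespace ClockEq

variable {K : ℕ} {x y z : ℝ≥0}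

lemma trans (hxy : ClockEq K x y) (hyz : ClockEq K y z) : ClockEq K x z := by
  rcases hxy with rfl | ⟨hx, hy⟩
  · exact hyz
  rcases hyz with rfl | ⟨-, hz⟩
  · exact Or.inr ⟨hx, hy⟩
  · exact Or.inr ⟨hx, hz⟩

lemma add_right (h : ClockEq K x y) (t : ℝ≥0) : ClockEq K (x + t) (y + t) :=
  h.imp (congrArg (· + t)) fun h => ⟨h.1.trans_le le_self_add, h.2.trans_le le_self_add⟩

end ClockEq

namespace CC

variable {φ : CC} {K : ℕ} {x y : ℝ≥0}

lemma sat_iff_of_floor_eq (hf : ⌊x⌋₊ = ⌊y⌋₊) (hz : fracPart x = 0 ↔ fracPart y = 0) :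
    φ.sat x ↔ φ.sat y := by
  have hlt : ∀ {z : ℝ≥0} {m : ℕ}, z < m ↔ ⌊z⌋₊ < m := fun {z} _ => (Nat.floor_lt zero_le).symm
  induction φ with
  | lt m => simp only [sat, hlt, hf]
  | gt m =>
    have key : ∀ z : ℝ≥0, (m : ℝ≥0) < z ↔ ¬ (z < m ∨ z = m) := fun z => by
      rw [← le_iff_lt_or_eq, not_le]
    simp only [sat, key, hlt, eq_natCast_iff_floor_eq, hf, hz]
  | eq m => simp only [sat, eq_natCast_iff_floor_eq, hf, hz]
  | and φ ψ ihφ ihψ => simp only [sat, ihφ, ihψ]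

lemma sat_iff_of_lt_of_lt (hm : φ.maxConst ≤ K) (hx : (K : ℝ≥0) < x) (hy : (K : ℝ≥0) < y) :
    φ.sat x ↔ φ.sat y := by
  induction φ with
  | lt m =>
    have hmK : (m : ℝ≥0) ≤ K := Nat.cast_le.mpr hm
    exact iff_of_false (not_lt.mpr (hmK.trans hx.le)) (not_lt.mpr (hmK.trans hy.le))
  | gt m =>
    have hmK : (m : ℝ≥0) ≤ K := Nat.cast_le.mpr hm
    exact iff_of_true (hmK.trans_lt hx) (hmK.trans_lt hy)
  | eq m =>
    have hmK : (m : ℝ≥0) ≤ K := Nat.cast_le.mpr hm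
    exact iff_of_false (hx.trans_le' hmK).ne' (hy.trans_le' hmK).ne'
  | and φ ψ ihφ ihψ =>
    rw [maxConst, max_le_iff] at hm
    simp only [sat, ihφ hm.1, ihψ hm.2]

lemma sat_iff_of_regEq (hm : φ.maxConst ≤ K) (h : RegEq K x y) : φ.sat x ↔ φ.sat y :=
  h.elim (fun h => sat_iff_of_floor_eq h.1 h.2) fun h => sat_iff_of_lt_of_lt hm h.1 h.2

lemma sat_iff_of_clockEq (hm : φ.maxConst ≤ K) (h : ClockEq K x y) : φ.sat x ↔ φ.sat y :=
  h.elim (fun h => h ▸ Iff.rfl) fun h => sat_iff_of_lt_of_lt hm h.1 h.2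

end CC

lemma phiOf_sat_self (K : ℕ) (w : ℝ≥0) : (phiOf K w).sat w := by
  unfold phiOf
  split_ifs with hwK hw
  · obtain ⟨m, rfl⟩ := hw
    simp only [CC.sat, Nat.floor_natCast]
  · refine ⟨(Nat.floor_le zero_le).lt_of_ne fun h => hw ⟨_, h.symm⟩, ?_⟩
    exact_mod_cast Nat.lt_floor_add_one w
  · exact not_le.mp hwK

lemma regEq_of_phiOf_sat {K : ℕ} {w z : ℝ≥0} (h : (phiOf K w).sat z) : RegEq K z w := by
  unfold phiOf at h
  split_ifs at h with hwK hw
  · obtain ⟨m, rfl⟩ := hw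
    rw [CC.sat, Nat.floor_natCast] at h
    exact h ▸ Or.inl ⟨rfl, Iff.rfl⟩
  · obtain ⟨hlo, hhi⟩ := h
    have hzw : ⌊z⌋₊ = ⌊w⌋₊ := (Nat.floor_eq_iff zero_le).mpr ⟨hlo.le, by exact_mod_cast hhi⟩
    refine Or.inl ⟨hzw, iff_of_false (fun hz => ?_) fun hw' => hw ⟨_, fracPart_eq_zero_iff.mp hw'⟩⟩
    rw [fracPart_eq_zero_iff, hzw] at hz
    exact hlo.ne' hz
  · exact Or.inr ⟨h, not_le.mp hwK⟩

lemma phiOf_congr {K : ℕ} {z w : ℝ≥0} (h : RegEq K z w) : phiOf K z = phiOf K w := by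
  rcases h with ⟨hf, hz⟩ | ⟨hzK, hwK⟩
  · have hle : z ≤ K ↔ w ≤ K := by
      simpa only [CC.sat, not_lt] using not_congr (CC.sat_iff_of_floor_eq (φ := .gt K) hf hz)
    have hnat : IsNatVal z ↔ IsNatVal w := by
      rw [isNatVal_iff_fracPart_eq_zero, isNatVal_iff_fracPart_eq_zero, hz]
    simp only [phiOf, hle, hnat, hf]
  · simp only [phiOf, not_le.mpr hzK, not_le.mpr hwK, if_false]

lemma phiOf_eq_eq_iff {K : ℕ} {w : ℝ≥0} :
    (∃ j : ℕ, phiOf K w = .eq j) ↔ IsNatVal w ∧ w ≤ K := by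
  unfold phiOf
  split_ifs with hwK hw
  · exact iff_of_true ⟨_, rfl⟩ ⟨hw, hwK⟩
  · exact iff_of_false (fun ⟨_, h⟩ => h) fun h => hw h.1
  · exact iff_of_false (fun ⟨_, h⟩ => h) fun h => hwK h.2

lemma phiOf_strictGuard (K : ℕ) (w : ℝ≥0) : StrictGuard K (phiOf K w) := by
  unfold phiOf
  split_ifs
  · exact Or.inl ⟨_, rfl⟩
  · exact Or.inr (Or.inl ⟨_, rfl⟩)
  · exact Or.inr (Or.inr rfl)

lemma phiOf_maxConst_le (K : ℕ) (w : ℝ≥0) : (phiOf K w).maxConst ≤ K := by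
  unfold phiOf
  split_ifs with hwK hw
  · simpa only [CC.maxConst, Nat.floor_natCast] using Nat.floor_le_floor hwK
  · have hlt : ⌊w⌋₊ < K :=
      (Nat.floor_lt zero_le).mpr (hwK.lt_of_ne fun h => hw ⟨K, h⟩)
    simp only [CC.maxConst]
    omega
  · exact le_rfl

lemma finite_setOf_strictGuard (K : ℕ) : {φ : CC | StrictGuard K φ ∧ φ.maxConst ≤ K}.Finite := by
  refine ((((Set.finite_Iic K).image CC.eq).union ((Set.finite_Iic K).image
    fun j => .and (.gt j) (.lt (j + 1)))).insert (CC.gt K)).subset ?_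
  rintro φ ⟨⟨j, rfl⟩ | ⟨j, rfl⟩ | rfl, hK⟩
  · exact Or.inr (Or.inl ⟨j, hK, rfl⟩)
  · refine Or.inr (Or.inr ⟨j, ?_, rfl⟩)
    simp only [CC.maxConst, max_le_iff] at hK
    exact Set.mem_Iic.mpr (by omega)
  · exact Or.inl rfl

section Automata

variable {A : Type}

lemma TA.IsStrict.isIRTA {M : TA A} {K : ℕ} (hs : M.IsStrict K) : M.IsIRTA :=
  fun θ hθ hr => (hs θ hθ).2.mpr hr

lemma TA.IsStrict.trans_finite [Finite A] {M : TA A} [Finite M.Q] {K : ℕ} (hs : M.IsStrict K)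
    (hK : M.MaxConstLE K) : M.trans.Finite := by
  have := (finite_setOf_strictGuard K).to_subtype
  refine (Set.finite_range fun p : M.Q × M.Q × A × {φ : CC | StrictGuard K φ ∧ φ.maxConst ≤ K} ×
    Bool => (⟨p.1, p.2.1, p.2.2.1, p.2.2.2.1, p.2.2.2.2⟩ : TTrans M.Q A)).subset ?_
  intro θ hθ
  exact ⟨(θ.src, θ.dst, θ.lab, ⟨θ.guard, (hs θ hθ).1, hK θ hθ⟩, θ.reset), rfl⟩

lemma TA.IsIRTA.eq_natCast_of_reset {M : TA A} (hirta : M.IsIRTA) {K : ℕ} (hK : M.MaxConstLE K)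
    {θ : TTrans M.Q A} (hθ : θ ∈ M.trans) (hr : θ.reset = true) {x : ℝ≥0}
    (hx : θ.guard.sat x) : ∃ n ≤ K, x = n := by
  obtain ⟨n, hn⟩ := hirta θ hθ hr
  refine ⟨n, ?_, ?_⟩
  · simpa only [hn, CC.maxConst] using hK θ hθ
  · rwa [hn] at hx

def IsTimedSimulation (M N : TA A) (R : M.Q × ℝ≥0 → N.Q × ℝ≥0 → Prop) : Prop :=
  ∀ (c : M.Q × ℝ≥0) (d : N.Q × ℝ≥0) (t : ℝ≥0) (θ : TTrans M.Q A), θ ∈ M.trans → θ.src = c.1 →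
    θ.guard.sat (c.2 + t) → R c d →
    ∃ θ' ∈ N.trans, θ'.src = d.1 ∧ θ'.lab = θ.lab ∧ θ'.guard.sat (d.2 + t) ∧
      R (θ.dst, if θ.reset then 0 else c.2 + t) (θ'.dst, if θ'.reset then 0 else d.2 + t)

lemma Steps.simulate {M N : TA A} {R : M.Q × ℝ≥0 → N.Q × ℝ≥0 → Prop}
    (hR : IsTimedSimulation M N R) {c e : M.Q × ℝ≥0} {u : TimedWord A} (hs : Steps M c u e) :
    ∀ d, R c d → ∃ e', Steps N d u e' ∧ R e e' := by
  induction hs with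
  | nil c => exact fun d h => ⟨d, .nil d, h⟩
  | cons θ hθ hsrc hlab hg _ ih =>
    intro d h
    obtain ⟨θ', hθ', hsrc', hlab', hg', h'⟩ := hR _ d _ θ hθ hsrc hg h
    obtain ⟨e', hs', he'⟩ := ih _ h'
    exact ⟨e', .cons θ' hθ' hsrc' (hlab'.trans hlab) hg' hs', he'⟩

lemma TA.lang_subset_of_simulation {M N : TA A} {R : M.Q × ℝ≥0 → N.Q × ℝ≥0 → Prop}
    (hR : IsTimedSimulation M N R) (hinit : R (M.init, 0) (N.init, 0))
    (hfinal : ∀ c d, R c d → c.1 ∈ M.final → d.1 ∈ N.final) : M.Lang ⊆ N.Lang := by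
  rintro u ⟨q, ν, hs, hq⟩
  obtain ⟨e', hs', he'⟩ := hs.simulate hR _ hinit
  exact ⟨e'.1, e'.2, hs', hfinal _ _ he' hq⟩

end Automata

section Strictify

variable {A Q : Type}

def capOffset (K n : ℕ) : Fin (K + 2) := ⟨min n (K + 1), by omega⟩

lemma clockEq_capOffset (K n : ℕ) : ClockEq K n (capOffset K n : ℕ) := by
  change ClockEq K n (min n (K + 1) : ℕ)
  rcases le_or_gt n (K + 1) with h | h
  · exact Or.inl (by rw [min_eq_left h])
  · rw [min_eq_right h.le]
    exact Or.inr ⟨by exact_mod_cast (by omega : K < n), by exact_mod_cast (by omega : K < K + 1)⟩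

/-- When the new clock, reading `w`, is reset, the offset becomes the value `0` or `⌊w⌋₊ + m` of
the simulated clock, capped at `K + 1`. -/
noncomputable def liftTrans (K : ℕ) (θ : TTrans Q A) (m : Fin (K + 2)) (w : ℝ≥0) :
    TTrans (Q × Fin (K + 2)) A where
  src := (θ.src, m)
  dst := (θ.dst, if IsNatVal w ∧ w ≤ K then capOffset K (if θ.reset then 0 else ⌊w⌋₊ + m) else m)
  lab := θ.lab
  guard := phiOf K w
  reset := decide (IsNatVal w ∧ w ≤ K)

noncomputable def strictify (M : TA A) (K : ℕ) : TA A where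
  Q := M.Q × Fin (K + 2)
  init := (M.init, 0)
  final := {p | p.1 ∈ M.final}
  trans := {θ' | ∃ θ ∈ M.trans, ∃ (m : Fin (K + 2)) (w : ℝ≥0),
    θ.guard.sat (w + (m : ℕ)) ∧ θ' = liftTrans K θ m w}

lemma liftTrans_congr {K : ℕ} (θ : TTrans Q A) (m : Fin (K + 2)) {w w' : ℝ≥0}
    (h : RegEq K w w') : liftTrans K θ m w = liftTrans K θ m w' := by
  by_cases hw : IsNatVal w ∧ w ≤ K
  · rw [h.eq_of_isNatVal hw.1 hw.2]
  · have hw' : ¬ (IsNatVal w' ∧ w' ≤ K) := fun hw' =>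
      hw (h.symm.eq_of_isNatVal hw'.1 hw'.2 ▸ hw')
    simp only [liftTrans, phiOf_congr h, hw, hw', if_false]

def Tracks (K : ℕ) (c : Q × ℝ≥0) (c' : (Q × Fin (K + 2)) × ℝ≥0) : Prop :=
  c'.1.1 = c.1 ∧ ClockEq K c.2 (c'.2 + (c'.1.2 : ℕ))

lemma clockEq_liftTrans_dst {K : ℕ} {θ : TTrans Q A} {x w : ℝ≥0} {m : Fin (K + 2)}
    (hreset : θ.reset = true → ∃ n ≤ K, x = n) (hx : ClockEq K x (w + (m : ℕ))) :
    ClockEq K (if θ.reset then 0 else x)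
      ((if (liftTrans K θ m w).reset then 0 else w) + ((liftTrans K θ m w).dst.2 : ℕ)) := by
  simp only [liftTrans, decide_eq_true_eq]
  by_cases hw : IsNatVal w ∧ w ≤ K
  · rw [if_pos hw, if_pos hw, zero_add]
    obtain ⟨⟨n, rfl⟩, -⟩ := hw
    cases θ.reset
    · rw [if_neg Bool.false_ne_true, if_neg Bool.false_ne_true, Nat.floor_natCast]
      exact hx.trans (by exact_mod_cast clockEq_capOffset K (n + m))
    · simp [capOffset, ClockEq]
  · rw [if_neg hw, if_neg hw]
    cases hr : θ.reset
    · simpa using hx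
    · obtain ⟨n, hnK, rfl⟩ := hreset hr
      rcases hx with hx | ⟨hn, -⟩
      · exact absurd ⟨isNatVal_of_add_natCast_eq hx.symm,
          le_self_add.trans (hx ▸ Nat.cast_le.mpr hnK)⟩ hw
      · exact absurd hn (not_lt.mpr (Nat.cast_le.mpr hnK))

lemma strictify_isStrict (M : TA A) (K : ℕ) : (strictify M K).IsStrict K := by
  rintro _ ⟨θ, -, m, w, -, rfl⟩
  exact ⟨phiOf_strictGuard K w, by simp only [liftTrans, phiOf_eq_eq_iff, decide_eq_true_eq]⟩

lemma strictify_maxConstLE (M : TA A) (K : ℕ) : (strictify M K).MaxConstLE K := by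
  rintro _ ⟨θ, -, m, w, -, rfl⟩
  exact phiOf_maxConst_le K w

lemma strictify_isFinite [Finite A] (M : TA A) [Finite M.Q] (K : ℕ) : (strictify M K).IsFinite :=
  have : Finite (strictify M K).Q := inferInstanceAs (Finite (M.Q × Fin (K + 2)))
  ⟨this, (strictify_isStrict M K).trans_finite (strictify_maxConstLE M K)⟩

lemma tracks_init (M : TA A) (K : ℕ) :
    Tracks K (M.init, 0) ((strictify M K).init, 0) :=
  ⟨rfl, Or.inl (by simp [strictify])⟩

variable {M : TA A} {K : ℕ}

lemma strictify_simulates (hirta : M.IsIRTA) (hK : M.MaxConstLE K) :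
    IsTimedSimulation M (strictify M K) (Tracks K) := by
  rintro ⟨q, ν⟩ ⟨⟨_, m⟩, ν'⟩ t θ hθ hsrc hg ⟨rfl, hν⟩
  have hx : ClockEq K (ν + t) (ν' + t + (m : ℕ)) := add_right_comm ν' (m : ℕ) t ▸ hν.add_right t
  refine ⟨liftTrans K θ m (ν' + t), ⟨θ, hθ, m, ν' + t, (CC.sat_iff_of_clockEq (hK θ hθ) hx).mp hg,
    rfl⟩, by rw [liftTrans, hsrc], rfl, phiOf_sat_self K _, rfl,
    clockEq_liftTrans_dst (fun hr => hirta.eq_natCast_of_reset hK hθ hr hg) hx⟩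

lemma strictify_simulated (hirta : M.IsIRTA) (hK : M.MaxConstLE K) :
    IsTimedSimulation (strictify M K) M fun c' c => Tracks K c c' := by
  rintro ⟨⟨_, m'⟩, ν'⟩ ⟨q, ν⟩ t _ ⟨θ, hθ, m, w, hsat, rfl⟩ hsrc hg ⟨rfl, hν⟩
  obtain ⟨hq, rfl⟩ : θ.src = _ ∧ m = m' := Prod.mk.inj hsrc
  have hreg : RegEq K (ν' + t) w := regEq_of_phiOf_sat hg
  have hx : ClockEq K (ν + t) (ν' + t + (m : ℕ)) := add_right_comm ν' (m : ℕ) t ▸ hν.add_right t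
  have hg' : θ.guard.sat (ν + t) := (CC.sat_iff_of_clockEq (hK θ hθ) hx).mpr <|
    (CC.sat_iff_of_regEq (hK θ hθ) (hreg.add_natCast m)).mpr hsat
  rw [liftTrans_congr θ m hreg.symm]
  exact ⟨θ, hθ, hq, rfl, hg', rfl,
    clockEq_liftTrans_dst (fun hr => hirta.eq_natCast_of_reset hK hθ hr hg') hx⟩

lemma strictify_lang (hirta : M.IsIRTA) (hK : M.MaxConstLE K) : (strictify M K).Lang = M.Lang :=
  (TA.lang_subset_of_simulation (strictify_simulated hirta hK) (tracks_init M K)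
      fun _ _ h hf => h.1 ▸ hf).antisymm
    (TA.lang_subset_of_simulation (strictify_simulates hirta hK) (tracks_init M K)
      fun _ _ h hf => show _ ∈ M.final from h.1 ▸ hf)

lemma strictify_deterministic (hK : M.MaxConstLE K) (hdet : M.Deterministic) :
    (strictify M K).Deterministic := by
  rintro _ ⟨θ₁, hθ₁, m, w₁, hsat₁, rfl⟩ _ ⟨θ₂, hθ₂, m₂, w₂, hsat₂, rfl⟩ hne hsrc hlab z ⟨hz₁, hz₂⟩
  obtain ⟨hq, rfl⟩ : θ₁.src = θ₂.src ∧ m = m₂ := Prod.mk.inj hsrc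
  have hreg₁ : RegEq K z w₁ := regEq_of_phiOf_sat hz₁
  have hreg₂ : RegEq K z w₂ := regEq_of_phiOf_sat hz₂
  rw [liftTrans_congr θ₁ m hreg₁.symm, liftTrans_congr θ₂ m hreg₂.symm] at hne
  have hg₁ := (CC.sat_iff_of_regEq (hK θ₁ hθ₁) (hreg₁.add_natCast m)).mpr hsat₁
  have hg₂ := (CC.sat_iff_of_regEq (hK θ₂ hθ₂) (hreg₂.add_natCast m)).mpr hsat₂
  obtain rfl : θ₁ = θ₂ := by_contra fun h => hdet θ₁ hθ₁ θ₂ hθ₂ h hq hlab _ ⟨hg₁, hg₂⟩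
  exact hne rfl

end Strictify

/-- every language of a (finite) 1-IRTA is the language of a strict
1-IRTA with no greater maximal constant; determinism can be preserved. -/
theorem statement0 {A : Type} [Finite A] (M : TA A) (hfin : M.IsFinite)
    (hirta : M.IsIRTA) (K : ℕ) (hK : M.MaxConstLE K) :
    ∃ M' : TA A, M'.IsFinite ∧ M'.IsIRTA ∧ M'.IsStrict K ∧ M'.MaxConstLE K ∧
      M'.Lang = M.Lang ∧ (M.Deterministic → M'.Deterministic) :=
  have := hfin.1
  ⟨strictify M K, strictify_isFinite M K, (strictify_isStrict M K).isIRTA, strictify_isStrict M K,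
    strictify_maxConstLE M K, strictify_lang hirta hK, strictify_deterministic hK⟩

end IRTA
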